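/- Variational derivative of the NLS Hamiltonian with respect to u₁: let u₁, u₂, h : ℝ² → ℂ be smooth and compactly supported and r, s : ℝ → ℝ be continuous. Then the function ε ↦ H(u₁ + εh, u₂) of the real variable ε is differentiable at ε = 0 with derivative ∬_{ℝ²} [−Δu₂ − (r(y)+s(x))u₂ − 2u₂·(T(u₁u₂))]·h dx dy, where Δu₂ = ∂²u₂/∂x² + ∂²u₂/∂y². -/

import Mathlib

open MeasureTheory

/-- The antiderivative operator `(∂⁻¹f)(x) = (1/2)[∫_{-∞}^x f − ∫_x^{+∞} f]`. -/
noncomputable def pinv (f : ℝ → ℂ) (x : ℝ) : ℂ :=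
  (1 / 2) * ((∫ s in Set.Iio x, f s) - ∫ s in Set.Ioi x, f s)

/-- `∂_x^{-1}` : the antiderivative operator in the first variable. -/
noncomputable def pinvX (g : ℝ × ℝ → ℂ) : ℝ × ℝ → ℂ :=
  fun p => pinv (fun s => g (s, p.2)) p.1

/-- `∂_y^{-1}` : the antiderivative operator in the second variable. -/
noncomputable def pinvY (g : ℝ × ℝ → ℂ) : ℝ × ℝ → ℂ :=
  fun p => pinv (fun s => g (p.1, s)) p.2

/-- `∂_x` : partial derivative in the first variable. -/
noncomputable def dX (g : ℝ × ℝ → ℂ) : ℝ × ℝ → ℂ :=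
  fun p => deriv (fun x => g (x, p.2)) p.1

/-- `∂_y` : partial derivative in the second variable. -/
noncomputable def dY (g : ℝ × ℝ → ℂ) : ℝ × ℝ → ℂ :=
  fun p => deriv (fun y => g (p.1, y)) p.2

/-- `T = ∂_x ∂_y^{-1} + ∂_y ∂_x^{-1}`. -/
noncomputable def T (g : ℝ × ℝ → ℂ) : ℝ × ℝ → ℂ :=
  fun p => dX (pinvY g) p + dY (pinvX g) p

/-- The NLS Hamiltonian (1.11). -/
noncomputable def Ham (r s : ℝ → ℝ) (u₁ u₂ : ℝ × ℝ → ℂ) : ℂ :=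
  ∫ p : ℝ × ℝ,
    (dX u₁ p * dX u₂ p + dY u₁ p * dY u₂ p
      - u₁ p * ((r p.2 : ℂ) + (s p.1 : ℂ)) * u₂ p
      - u₁ p * u₂ p * T (fun q => u₁ q * u₂ q) p)

namespace NLSaux

open Set Metric Filter Topology

/-! ### Partial derivatives of smooth functions -/

lemma hasDerivAt_sliceX' {g : ℝ × ℝ → ℂ} (hg : ContDiff ℝ (⊤ : ℕ∞) g) (p : ℝ × ℝ) :
    HasDerivAt (fun t => g (t, p.2)) (fderiv ℝ g p ((1 : ℝ), (0 : ℝ))) p.1 := by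
  have hline : HasDerivAt (fun t : ℝ => (t, p.2)) ((1 : ℝ), (0 : ℝ)) p.1 :=
    (hasDerivAt_id p.1).prodMk (hasDerivAt_const p.1 p.2)
  have hgd := (hg.differentiable (by simp) p).hasFDerivAt
  have H := hgd.comp_hasDerivAt p.1 hline
  exact H

lemma dX_eq_fderiv {g : ℝ × ℝ → ℂ} (hg : ContDiff ℝ (⊤ : ℕ∞) g) :
    dX g = fun p => fderiv ℝ g p ((1 : ℝ), (0 : ℝ)) :=
  funext fun p => (hasDerivAt_sliceX' hg p).deriv

lemma hasDerivAt_sliceX {g : ℝ × ℝ → ℂ} (hg : ContDiff ℝ (⊤ : ℕ∞) g) (x y : ℝ) :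
    HasDerivAt (fun t => g (t, y)) (dX g (x, y)) x := by
  rw [dX_eq_fderiv hg]
  exact hasDerivAt_sliceX' hg (x, y)

lemma dX_contDiff {g : ℝ × ℝ → ℂ} (hg : ContDiff ℝ (⊤ : ℕ∞) g) : ContDiff ℝ (⊤ : ℕ∞) (dX g) := by
  rw [dX_eq_fderiv hg]
  exact (ContinuousLinearMap.apply ℝ ℂ ((1 : ℝ), (0 : ℝ))).contDiff.comp
    (hg.fderiv_right (by simp))

lemma dX_hasCompactSupport {g : ℝ × ℝ → ℂ} (hg : ContDiff ℝ (⊤ : ℕ∞) g)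
    (hgc : HasCompactSupport g) : HasCompactSupport (dX g) := by
  rw [dX_eq_fderiv hg]
  exact hgc.fderiv_apply ℝ ((1 : ℝ), (0 : ℝ))

/-- swap auxiliary -/
lemma contDiff_swap {g : ℝ × ℝ → ℂ} (hg : ContDiff ℝ (⊤ : ℕ∞) g) :
    ContDiff ℝ (⊤ : ℕ∞) (fun q : ℝ × ℝ => g (q.2, q.1)) :=
  hg.comp (contDiff_snd.prodMk contDiff_fst)

lemma hcs_swap {g : ℝ × ℝ → ℂ} (hgc : HasCompactSupport g) :
    HasCompactSupport (fun q : ℝ × ℝ => g (q.2, q.1)) :=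
  hgc.comp_homeomorph (Homeomorph.prodComm ℝ ℝ)

lemma dY_eq_swap (g : ℝ × ℝ → ℂ) :
    dY g = fun p => dX (fun q : ℝ × ℝ => g (q.2, q.1)) (p.2, p.1) := rfl

lemma hasDerivAt_sliceY {g : ℝ × ℝ → ℂ} (hg : ContDiff ℝ (⊤ : ℕ∞) g) (x y : ℝ) :
    HasDerivAt (fun t => g (x, t)) (dY g (x, y)) y :=
  hasDerivAt_sliceX (contDiff_swap hg) y x

lemma dY_contDiff {g : ℝ × ℝ → ℂ} (hg : ContDiff ℝ (⊤ : ℕ∞) g) : ContDiff ℝ (⊤ : ℕ∞) (dY g) := by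
  rw [dY_eq_swap]
  exact (dX_contDiff (contDiff_swap hg)).comp (contDiff_snd.prodMk contDiff_fst)

lemma dY_hasCompactSupport {g : ℝ × ℝ → ℂ} (hg : ContDiff ℝ (⊤ : ℕ∞) g)
    (hgc : HasCompactSupport g) : HasCompactSupport (dY g) := by
  rw [dY_eq_swap]
  exact (dX_hasCompactSupport (contDiff_swap hg) (hcs_swap hgc)).comp_homeomorph
    (Homeomorph.prodComm ℝ ℝ)

/-! ### Support radii -/

lemma radius1 {f : ℝ → ℂ} (hfc : HasCompactSupport f) :
    ∃ R : ℝ, 0 < R ∧ ∀ x : ℝ, R ≤ |x| → f x = 0 := by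
  obtain ⟨R, hR⟩ := hfc.isBounded.subset_closedBall 0
  refine ⟨max R 0 + 1, by positivity, fun x hx => ?_⟩
  apply image_eq_zero_of_notMem_tsupport
  intro hmem
  have h1 : |x| ≤ R := by simpa [Real.norm_eq_abs] using mem_closedBall_zero_iff.1 (hR hmem)
  have h2 : R ≤ max R 0 := le_max_left _ _
  linarith

lemma radius2 {g : ℝ × ℝ → ℂ} (hgc : HasCompactSupport g) :
    ∃ R : ℝ, 0 < R ∧ ∀ x y : ℝ, R ≤ |x| ∨ R ≤ |y| → g (x, y) = 0 := by
  obtain ⟨R, hR⟩ := hgc.isBounded.subset_closedBall 0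
  refine ⟨max R 0 + 1, by positivity, fun x y hxy => ?_⟩
  apply image_eq_zero_of_notMem_tsupport
  intro hmem
  have h1 : ‖((x, y) : ℝ × ℝ)‖ ≤ R := by
    simpa using mem_closedBall_zero_iff.1 (hR hmem)
  rw [Prod.norm_def] at h1
  have hx : |x| ≤ R := le_trans (by simp [Real.norm_eq_abs, le_max_left] :
    |x| ≤ max ‖x‖ ‖y‖) h1
  have hy : |y| ≤ R := le_trans (by simp [Real.norm_eq_abs, le_max_right] :
    |y| ≤ max ‖x‖ ‖y‖) h1
  have h2 : R ≤ max R 0 := le_max_left _ _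
  rcases hxy with h | h <;> linarith

lemma sliceY_hcs {g : ℝ × ℝ → ℂ} {R : ℝ}
    (h0 : ∀ x y : ℝ, R ≤ |x| ∨ R ≤ |y| → g (x, y) = 0) (x : ℝ) :
    HasCompactSupport fun t => g (x, t) :=
  HasCompactSupport.intro (isCompact_Icc (a := -R) (b := R)) fun t ht => by
    refine h0 x t (Or.inr ?_)
    rw [Set.mem_Icc, not_and_or, not_le, not_le] at ht
    rcases ht with ht | ht
    · exact le_abs.2 (Or.inr (by linarith))
    · exact le_abs.2 (Or.inl ht.le)

lemma sliceX_hcs {g : ℝ × ℝ → ℂ} {R : ℝ}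
    (h0 : ∀ x y : ℝ, R ≤ |x| ∨ R ≤ |y| → g (x, y) = 0) (y : ℝ) :
    HasCompactSupport fun t => g (t, y) :=
  sliceY_hcs (g := fun q : ℝ × ℝ => g (q.2, q.1))
    (fun a b hab => h0 b a hab.symm) y

/-! ### 1D facts about `pinv` -/

lemma pinv_eq_Iic {f : ℝ → ℂ} (hf : Integrable f) (x : ℝ) :
    pinv f x = (∫ t in Set.Iic x, f t) - (1 / 2) * ∫ t, f t := by
  have h1 : (∫ t in Set.Iio x, f t) = ∫ t in Set.Iic x, f t :=
    (integral_Iic_eq_integral_Iio).symm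
  have h2 : (∫ t in Set.Iic x, f t) + (∫ t in Set.Ioi x, f t) = ∫ t, f t :=
    intervalIntegral.integral_Iic_add_Ioi hf.integrableOn hf.integrableOn
  have h3 : (∫ t in Set.Ioi x, f t) = (∫ t, f t) - ∫ t in Set.Iic x, f t :=
    eq_sub_of_add_eq' h2
  unfold pinv
  rw [h1, h3]
  ring

lemma pinv_add_mul {a b : ℝ → ℂ} (ha : Integrable a) (hb : Integrable b) (c : ℂ) (x : ℝ) :
    pinv (fun t => a t + c * b t) x = pinv a x + c * pinv b x := by
  have hcb : Integrable (fun t => c * b t) := hb.const_mul c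
  unfold pinv
  rw [integral_add ha.integrableOn hcb.integrableOn,
    integral_add ha.integrableOn hcb.integrableOn,
    integral_const_mul, integral_const_mul]
  ring

lemma pinv_hasDerivAt {f : ℝ → ℂ} (hf : Integrable f) (hc : Continuous f) (x : ℝ) :
    HasDerivAt (pinv f) (f x) x := by
  have hfe : pinv f = fun u =>
      ((∫ t in Set.Iic (0 : ℝ), f t) + ∫ t in (0 : ℝ)..u, f t) - (1 / 2) * ∫ t, f t := by
    funext u
    rw [pinv_eq_Iic hf u]
    have h := intervalIntegral.integral_Iic_sub_Iic hf.integrableOn hf.integrableOn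
      (a := (0 : ℝ)) (b := u)
    rw [← h]
    ring
  rw [hfe]
  have h1 : HasDerivAt (fun u => ∫ t in (0 : ℝ)..u, f t) (f x) x :=
    intervalIntegral.integral_hasDerivAt_right hf.intervalIntegrable
      (hc.stronglyMeasurableAtFilter _ _) hc.continuousAt
  simpa using ((hasDerivAt_const x (∫ t in Set.Iic (0 : ℝ), f t)).add h1).sub_const
    ((1 / 2) * ∫ t, f t)

lemma pinv_continuous {f : ℝ → ℂ} (hf : Integrable f) (hc : Continuous f) :
    Continuous (pinv f) :=
  continuous_iff_continuousAt.mpr fun x => (pinv_hasDerivAt hf hc x).continuousAt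

lemma tendsto_integral_Iic_atTop {f : ℝ → ℂ} (hf : Integrable f) :
    Tendsto (fun x => ∫ t in Set.Iic x, f t) atTop (𝓝 (∫ t, f t)) := by
  have h := intervalIntegral_tendsto_integral_Ioi 0 hf.integrableOn
    (tendsto_id (α := ℝ))
  have heq : (fun x : ℝ => ∫ t in Set.Iic x, f t) =
      fun x => (∫ t in Set.Iic (0 : ℝ), f t) + ∫ t in (0 : ℝ)..x, f t := by
    funext x
    have h2 := intervalIntegral.integral_Iic_sub_Iic hf.integrableOn hf.integrableOn
      (a := (0 : ℝ)) (b := x)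
    rw [← h2]; ring
  rw [heq, show (∫ t, f t) = (∫ t in Set.Iic (0 : ℝ), f t) + ∫ t in Set.Ioi (0 : ℝ), f t
    from (intervalIntegral.integral_Iic_add_Ioi hf.integrableOn hf.integrableOn).symm]
  exact h.const_add _

lemma tendsto_integral_Iic_atBot {f : ℝ → ℂ} (hf : Integrable f) :
    Tendsto (fun x => ∫ t in Set.Iic x, f t) atBot (𝓝 0) := by
  have h := intervalIntegral_tendsto_integral_Iic 0 hf.integrableOn
    (tendsto_id (α := ℝ))
  have heq : (fun x : ℝ => ∫ t in Set.Iic x, f t) =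
      fun x => (∫ t in Set.Iic (0 : ℝ), f t) - ∫ t in x..(0 : ℝ), f t := by
    funext x
    have h2 := intervalIntegral.integral_Iic_sub_Iic hf.integrableOn hf.integrableOn
      (a := x) (b := (0 : ℝ))
    rw [← h2]; ring
  rw [heq]
  have := (tendsto_const_nhds (x := ∫ t in Set.Iic (0 : ℝ), f t)
    (f := atBot (α := ℝ))).sub h
  simpa using this

lemma pinv_tendsto_atTop {f : ℝ → ℂ} (hf : Integrable f) :
    Tendsto (pinv f) atTop (𝓝 ((1 / 2) * ∫ t, f t)) := by
  have he : pinv f = fun x => (∫ t in Set.Iic x, f t) - (1 / 2) * ∫ t, f t :=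
    funext (pinv_eq_Iic hf)
  rw [he]
  have h := (tendsto_integral_Iic_atTop hf).sub_const ((1 / 2) * ∫ t, f t)
  have hval : (∫ t, f t) - (1 / 2) * ∫ t, f t = (1 / 2) * ∫ t, f t := by ring
  rwa [hval] at h

lemma pinv_tendsto_atBot {f : ℝ → ℂ} (hf : Integrable f) :
    Tendsto (pinv f) atBot (𝓝 (-((1 / 2) * ∫ t, f t))) := by
  have he : pinv f = fun x => (∫ t in Set.Iic x, f t) - (1 / 2) * ∫ t, f t :=
    funext (pinv_eq_Iic hf)
  rw [he]
  have h := (tendsto_integral_Iic_atBot hf).sub_const ((1 / 2) * ∫ t, f t)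
  have hval : (0 : ℂ) - (1 / 2) * ∫ t, f t = -((1 / 2) * ∫ t, f t) := by ring
  rwa [hval] at h

/-- Adjointness of `pinv`: `∫ f ⬝ pinv g = − ∫ pinv f ⬝ g`. -/
lemma pinv_adjoint {f g : ℝ → ℂ} (hf : Continuous f) (hfc : HasCompactSupport f)
    (hg : Continuous g) (hgc : HasCompactSupport g) :
    ∫ x, f x * pinv g x = - ∫ x, pinv f x * g x := by
  have hfi : Integrable f := hf.integrable_of_hasCompactSupport hfc
  have hgi : Integrable g := hg.integrable_of_hasCompactSupport hgc
  have hF : ∀ x, HasDerivAt (pinv f) (f x) x := pinv_hasDerivAt hfi hf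
  have hG : ∀ x, HasDerivAt (pinv g) (g x) x := pinv_hasDerivAt hgi hg
  have hFc : Continuous (pinv f) := pinv_continuous hfi hf
  have hGc : Continuous (pinv g) := pinv_continuous hgi hg
  have hφ1 : Integrable (fun x => f x * pinv g x) :=
    (hf.mul hGc).integrable_of_hasCompactSupport hfc.mul_right
  have hφ2 : Integrable (fun x => pinv f x * g x) :=
    (hFc.mul hg).integrable_of_hasCompactSupport hgc.mul_left
  set φ : ℝ → ℂ := fun x => f x * pinv g x + pinv f x * g x with hφdef
  have hφi : Integrable φ := hφ1.add hφ2
  have hK : ∀ x, HasDerivAt (fun y => pinv f y * pinv g y) (φ x) x := fun x => by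
    exact (hF x).mul (hG x)
  have hTend1 : Tendsto (fun A : ℝ => ∫ x in (-A)..A, φ x) atTop (𝓝 (∫ x, φ x)) :=
    intervalIntegral_tendsto_integral hφi tendsto_neg_atTop_atBot tendsto_id
  have hEval : ∀ A : ℝ, (∫ x in (-A)..A, φ x) =
      pinv f A * pinv g A - pinv f (-A) * pinv g (-A) := fun A =>
    intervalIntegral.integral_eq_sub_of_hasDerivAt (fun x _ => hK x)
      hφi.intervalIntegrable
  have hTend2 : Tendsto (fun A : ℝ =>
      pinv f A * pinv g A - pinv f (-A) * pinv g (-A)) atTop (𝓝 0) := by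
    have l1 := (pinv_tendsto_atTop hfi).mul (pinv_tendsto_atTop hgi)
    have l2 := ((pinv_tendsto_atBot hfi).comp tendsto_neg_atTop_atBot).mul
      ((pinv_tendsto_atBot hgi).comp tendsto_neg_atTop_atBot)
    have l3 := l1.sub l2
    have hval : ((1 / 2) * ∫ t, f t) * ((1 / 2) * ∫ t, g t) -
        (-((1 / 2) * ∫ t, f t)) * (-((1 / 2) * ∫ t, g t)) = 0 := by ring
    rw [hval] at l3
    exact l3
  have h0 : ∫ x, φ x = 0 := by
    refine tendsto_nhds_unique ?_ hTend2
    have : (fun A : ℝ => ∫ x in (-A)..A, φ x) = fun A : ℝ =>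
        pinv f A * pinv g A - pinv f (-A) * pinv g (-A) := funext hEval
    rw [← this]
    exact hTend1
  rw [hφdef] at h0
  rw [integral_add hφ1 hφ2] at h0
  exact eq_neg_of_add_eq_zero_left h0


/-! ### pinv via interval integrals, continuity of `pinvY`, `pinvX` -/

lemma abs_ge_of_not_mem_Icc {R t : ℝ} (ht : t ∉ Set.Icc (-R) R) : R ≤ |t| := by
  rw [Set.mem_Icc, not_and_or, not_le, not_le] at ht
  rcases ht with ht | ht
  · exact le_abs.2 (Or.inr (by linarith))
  · exact le_abs.2 (Or.inl ht.le)

lemma pinv_eq_intervalIntegral {f : ℝ → ℂ} (hf : Continuous f) {R : ℝ}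
    (h0 : ∀ t, R ≤ |t| → f t = 0) (x : ℝ) :
    pinv f x = (∫ t in (-R)..x, f t) - (1 / 2) * ∫ t in (-R)..R, f t := by
  have hfc : HasCompactSupport f :=
    HasCompactSupport.intro (isCompact_Icc (a := -R) (b := R)) fun t ht =>
      h0 t (abs_ge_of_not_mem_Icc ht)
  have hfi : Integrable f := hf.integrable_of_hasCompactSupport hfc
  have hIic0 : (∫ t in Set.Iic (-R), f t) = 0 :=
    setIntegral_eq_zero_of_forall_eq_zero fun t ht =>
      h0 t (le_abs.2 (Or.inr (by simp only [Set.mem_Iic] at ht; linarith)))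
  have h1 : ∀ u : ℝ, (∫ t in Set.Iic u, f t) = ∫ t in (-R)..u, f t := by
    intro u
    have h := intervalIntegral.integral_Iic_sub_Iic hfi.integrableOn hfi.integrableOn
      (a := -R) (b := u)
    rw [hIic0, sub_zero] at h
    exact h
  have h2 : (∫ t, f t) = ∫ t in (-R)..R, f t := by
    have h2a : (∫ t in Set.Ioi (R : ℝ), f t) = 0 :=
      setIntegral_eq_zero_of_forall_eq_zero fun t ht =>
        h0 t (le_abs.2 (Or.inl (le_of_lt (by simpa using ht))))
    rw [← intervalIntegral.integral_Iic_add_Ioi hfi.integrableOn hfi.integrableOn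
      (b := R), h2a, add_zero]
    exact h1 R
  rw [pinv_eq_Iic hfi, h1 x, h2]

lemma pinvY_continuous {g : ℝ × ℝ → ℂ} (hg : Continuous g) (hgc : HasCompactSupport g) :
    Continuous (pinvY g) := by
  obtain ⟨R, hR, h0⟩ := radius2 hgc
  have key : pinvY g = fun p : ℝ × ℝ =>
      (∫ t in (-R)..p.2, g (p.1, t)) - (1 / 2) * ∫ t in (-R)..R, g (p.1, t) := by
    funext p
    exact pinv_eq_intervalIntegral (hg.comp (Continuous.prodMk_right p.1))
      (fun t ht => h0 p.1 t (Or.inr ht)) p.2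
  rw [key]
  have hu : Continuous (Function.uncurry fun (p : ℝ × ℝ) (t : ℝ) => g (p.1, t)) :=
    hg.comp ((continuous_fst.comp continuous_fst).prodMk continuous_snd)
  exact (intervalIntegral.continuous_parametric_intervalIntegral_of_continuous hu continuous_snd).sub
    (continuous_const.mul
      (intervalIntegral.continuous_parametric_intervalIntegral_of_continuous' hu (-R) R))

lemma pinvX_eq_swap (g : ℝ × ℝ → ℂ) :
    pinvX g = fun p => pinvY (fun q : ℝ × ℝ => g (q.2, q.1)) (p.2, p.1) := rfl

lemma pinvX_continuous {g : ℝ × ℝ → ℂ} (hg : Continuous g) (hgc : HasCompactSupport g) :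
    Continuous (pinvX g) := by
  rw [pinvX_eq_swap]
  exact (pinvY_continuous (hg.comp (continuous_snd.prodMk continuous_fst))
    (hcs_swap hgc)).comp (continuous_snd.prodMk continuous_fst)

/-! ### Differentiation under the integral sign -/

lemma hasDerivAt_integral_slice {g : ℝ × ℝ → ℂ} (hg : ContDiff ℝ (⊤ : ℕ∞) g)
    (hgc : HasCompactSupport g) (μ : Measure ℝ) (hle : μ ≤ volume) (x₀ : ℝ) :
    HasDerivAt (fun x => ∫ t, g (x, t) ∂μ) (∫ t, dX g (x₀, t) ∂μ) x₀ := by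
  have hgcont := hg.continuous
  have hdc := (dX_contDiff hg).continuous
  have hdsupp := dX_hasCompactSupport hg hgc
  obtain ⟨R, hR, h0g⟩ := radius2 hgc
  obtain ⟨R', hR', h0⟩ := radius2 hdsupp
  obtain ⟨C, hC⟩ := hdsupp.exists_bound_of_continuous hdc
  have hslice : ∀ x : ℝ, Integrable (fun t => g (x, t)) μ := fun x =>
    ((hgcont.comp (Continuous.prodMk_right x)).integrable_of_hasCompactSupport
      (sliceY_hcs h0g x)).mono_measure hle
  have hbd : Integrable (Set.indicator (Set.Icc (-R') R') fun _ => C) μ :=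
    ((integrable_indicator_iff measurableSet_Icc).mpr
      (integrableOn_const measure_Icc_lt_top.ne)).mono_measure hle
  have hFmeas : ∀ x : ℝ, AEStronglyMeasurable (fun t => g (x, t)) μ := fun x =>
    (hgcont.comp (Continuous.prodMk_right x)).aestronglyMeasurable
  have hF'meas : AEStronglyMeasurable (fun t => dX g (x₀, t)) μ :=
    (hdc.comp (Continuous.prodMk_right x₀)).aestronglyMeasurable
  refine (hasDerivAt_integral_of_dominated_loc_of_deriv_le (s := Metric.ball x₀ 1)
    (F := fun x t => g (x, t)) (F' := fun x t => dX g (x, t)) (Metric.ball_mem_nhds x₀ one_pos)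
    (Filter.Eventually.of_forall hFmeas) (hslice x₀) hF'meas ?_ hbd ?_).2
  · refine Filter.Eventually.of_forall fun t x _ => ?_
    by_cases ht : t ∈ Set.Icc (-R') R'
    · simp only [Set.indicator_of_mem ht]
      exact hC (x, t)
    · have h1 : dX g (x, t) = 0 := h0 x t (Or.inr (abs_ge_of_not_mem_Icc ht))
      simp [Set.indicator_of_notMem ht, h1]
  · exact Filter.Eventually.of_forall fun t x _ => hasDerivAt_sliceX hg x t

lemma hasDerivAt_pinvY {g : ℝ × ℝ → ℂ} (hg : ContDiff ℝ (⊤ : ℕ∞) g)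
    (hgc : HasCompactSupport g) (p : ℝ × ℝ) :
    HasDerivAt (fun x => pinvY g (x, p.2)) (pinvY (dX g) p) p.1 := by
  have hgcont := hg.continuous
  obtain ⟨R, hR, h0g⟩ := radius2 hgc
  have hslice : ∀ x : ℝ, Integrable (fun t => g (x, t)) := fun x =>
    (hgcont.comp (Continuous.prodMk_right x)).integrable_of_hasCompactSupport
      (sliceY_hcs h0g x)
  have hdslice : Integrable (fun t => dX g (p.1, t)) := by
    obtain ⟨R', _, h0'⟩ := radius2 (dX_hasCompactSupport hg hgc)
    exact ((dX_contDiff hg).continuous.comp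
      (Continuous.prodMk_right p.1)).integrable_of_hasCompactSupport (sliceY_hcs h0' p.1)
  have h1 : (fun x => pinvY g (x, p.2)) = fun x =>
      (∫ t in Set.Iic p.2, g (x, t)) - (1 / 2) * ∫ t, g (x, t) := by
    funext x
    exact pinv_eq_Iic (hslice x) p.2
  rw [h1, show pinvY (dX g) p =
      (∫ t in Set.Iic p.2, dX g (p.1, t)) - (1 / 2) * ∫ t, dX g (p.1, t) from
    pinv_eq_Iic hdslice p.2]
  exact (hasDerivAt_integral_slice hg hgc (volume.restrict (Set.Iic p.2))
    Measure.restrict_le_self p.1).sub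
    ((hasDerivAt_integral_slice hg hgc volume le_rfl p.1).const_mul ((1 : ℂ) / 2))

lemma hasDerivAt_pinvX {g : ℝ × ℝ → ℂ} (hg : ContDiff ℝ (⊤ : ℕ∞) g)
    (hgc : HasCompactSupport g) (p : ℝ × ℝ) :
    HasDerivAt (fun y => pinvX g (p.1, y)) (pinvX (dY g) p) p.2 :=
  hasDerivAt_pinvY (contDiff_swap hg) (hcs_swap hgc) (p.2, p.1)

lemma dX_pinvY_eq {g : ℝ × ℝ → ℂ} (hg : ContDiff ℝ (⊤ : ℕ∞) g) (hgc : HasCompactSupport g) :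
    dX (pinvY g) = pinvY (dX g) :=
  funext fun p => (hasDerivAt_pinvY hg hgc p).deriv

lemma dY_pinvX_eq {g : ℝ × ℝ → ℂ} (hg : ContDiff ℝ (⊤ : ℕ∞) g) (hgc : HasCompactSupport g) :
    dY (pinvX g) = pinvX (dY g) :=
  funext fun p => (hasDerivAt_pinvX hg hgc p).deriv

lemma T_eq {g : ℝ × ℝ → ℂ} (hg : ContDiff ℝ (⊤ : ℕ∞) g) (hgc : HasCompactSupport g) :
    T g = fun p => pinvY (dX g) p + pinvX (dY g) p := by
  funext p
  unfold T
  rw [dX_pinvY_eq hg hgc, dY_pinvX_eq hg hgc]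

lemma T_continuous {g : ℝ × ℝ → ℂ} (hg : ContDiff ℝ (⊤ : ℕ∞) g) (hgc : HasCompactSupport g) :
    Continuous (T g) := by
  rw [T_eq hg hgc]
  exact (pinvY_continuous (dX_contDiff hg).continuous (dX_hasCompactSupport hg hgc)).add
    (pinvX_continuous (dY_contDiff hg).continuous (dY_hasCompactSupport hg hgc))


/-! ### Integration by parts -/

lemma ibp_line {F G F' G' : ℝ → ℂ}
    (hF : ∀ x, HasDerivAt F (F' x) x) (hG : ∀ x, HasDerivAt G (G' x) x)
    (hF'c : Continuous F') (hG'c : Continuous G') (hGsupp : HasCompactSupport G) :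
    ∫ x, F' x * G x = - ∫ x, F x * G' x := by
  have hFc : Continuous F :=
    continuous_iff_continuousAt.mpr fun x => (hF x).continuousAt
  have hGc : Continuous G :=
    continuous_iff_continuousAt.mpr fun x => (hG x).continuousAt
  have hG'eq : G' = deriv G := funext fun x => ((hG x).deriv).symm
  have hG'supp : HasCompactSupport G' := hG'eq ▸ hGsupp.deriv
  obtain ⟨R1, hR1, h1⟩ := radius1 hGsupp
  obtain ⟨R2, hR2, h2⟩ := radius1 hG'supp
  set R : ℝ := max R1 R2 + 1 with hRdef
  have hRR1 : R1 < R := by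
    have := le_max_left R1 R2; rw [hRdef]; linarith
  have hRR2 : R2 < R := by
    have := le_max_right R1 R2; rw [hRdef]; linarith
  have hRpos : 0 < R := lt_trans hR1 hRR1
  set φ : ℝ → ℂ := fun x => F' x * G x + F x * G' x with hφdef
  have hφc : Continuous φ := (hF'c.mul hGc).add (hFc.mul hG'c)
  have hKd : ∀ x, HasDerivAt (fun y => F y * G y) (φ x) x := fun x => (hF x).mul (hG x)
  have hIeq : (∫ x in (-R)..R, φ x) = F R * G R - F (-R) * G (-R) :=
    intervalIntegral.integral_eq_sub_of_hasDerivAt (fun x _ => hKd x)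
      (hφc.intervalIntegrable _ _)
  have hGR : G R = 0 := h1 R (by rw [abs_of_pos hRpos]; exact hRR1.le)
  have hGmR : G (-R) = 0 := h1 (-R) (by rw [abs_neg, abs_of_pos hRpos]; exact hRR1.le)
  have hφ0 : ∀ x, x ∉ Set.Ioc (-R) R → φ x = 0 := by
    intro x hx
    have hax : R ≤ |x| := by
      rw [Set.mem_Ioc, not_and_or, not_lt, not_le] at hx
      rcases hx with hx | hx
      · exact le_abs.2 (Or.inr (by linarith))
      · exact le_abs.2 (Or.inl hx.le)
    have e1 : G x = 0 := h1 x (le_trans hRR1.le hax)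
    have e2 : G' x = 0 := h2 x (le_trans hRR2.le hax)
    simp [hφdef, e1, e2]
  have hline : ∫ x, φ x = ∫ x in (-R)..R, φ x := by
    rw [intervalIntegral.integral_of_le (by linarith : (-R : ℝ) ≤ R)]
    exact (setIntegral_eq_integral_of_forall_compl_eq_zero fun x hx => hφ0 x hx).symm
  have hφint : ∫ x, φ x = 0 := by
    rw [hline, hIeq, hGR, hGmR]; ring
  have h1i : Integrable (fun x => F' x * G x) :=
    (hF'c.mul hGc).integrable_of_hasCompactSupport hGsupp.mul_left
  have h2i : Integrable (fun x => F x * G' x) :=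
    (hFc.mul hG'c).integrable_of_hasCompactSupport hG'supp.mul_left
  rw [hφdef] at hφint
  rw [integral_add h1i h2i] at hφint
  exact eq_neg_of_add_eq_zero_left hφint

/-- Rewriting an integral over `ℝ²` as an iterated integral, outer over `y`. -/
lemma integral_prod_symm' (f : ℝ × ℝ → ℂ) (hf : Integrable f) :
    ∫ p : ℝ × ℝ, f p = ∫ y, ∫ x, f (x, y) := by
  rw [show (volume : Measure (ℝ × ℝ)) = (volume : Measure ℝ).prod volume from
    Measure.volume_eq_prod ℝ ℝ] at hf ⊢
  exact integral_prod_symm f hf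

/-- Rewriting an integral over `ℝ²` as an iterated integral, outer over `x`. -/
lemma integral_prod' (f : ℝ × ℝ → ℂ) (hf : Integrable f) :
    ∫ p : ℝ × ℝ, f p = ∫ x, ∫ y, f (x, y) := by
  rw [show (volume : Measure (ℝ × ℝ)) = (volume : Measure ℝ).prod volume from
    Measure.volume_eq_prod ℝ ℝ] at hf ⊢
  exact integral_prod f hf

/-- 2D integration by parts in the first variable. -/
lemma ibp_x {P P' G : ℝ × ℝ → ℂ} (hP : Continuous P) (hP' : Continuous P')
    (hPd : ∀ p : ℝ × ℝ, HasDerivAt (fun x => P (x, p.2)) (P' p) p.1)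
    (hG : ContDiff ℝ (⊤ : ℕ∞) G) (hGc : HasCompactSupport G) :
    ∫ p : ℝ × ℝ, P' p * G p = - ∫ p : ℝ × ℝ, P p * dX G p := by
  obtain ⟨R, hRp, h0⟩ := radius2 hGc
  have hdGcont : Continuous (dX G) := (dX_contDiff hG).continuous
  have hdGs : HasCompactSupport (dX G) := dX_hasCompactSupport hG hGc
  have hint1 : Integrable (fun p : ℝ × ℝ => P' p * G p) :=
    (hP'.mul hG.continuous).integrable_of_hasCompactSupport hGc.mul_left
  have hint2 : Integrable (fun p : ℝ × ℝ => P p * dX G p) :=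
    (hP.mul hdGcont).integrable_of_hasCompactSupport hdGs.mul_left
  rw [integral_prod_symm' _ hint1, integral_prod_symm' _ hint2, ← integral_neg]
  have key : (fun y => ∫ x, P' (x, y) * G (x, y)) =
      fun y => - ∫ x, P (x, y) * dX G (x, y) := by
    funext y
    exact ibp_line (F := fun x => P (x, y)) (G := fun x => G (x, y))
      (fun x => hPd (x, y)) (fun x => hasDerivAt_sliceX hG x y)
      (hP'.comp (Continuous.prodMk_left y)) (hdGcont.comp (Continuous.prodMk_left y))
      (sliceX_hcs h0 y)
  rw [key]

/-- 2D integration by parts in the second variable. -/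
lemma ibp_y {P P' G : ℝ × ℝ → ℂ} (hP : Continuous P) (hP' : Continuous P')
    (hPd : ∀ p : ℝ × ℝ, HasDerivAt (fun y => P (p.1, y)) (P' p) p.2)
    (hG : ContDiff ℝ (⊤ : ℕ∞) G) (hGc : HasCompactSupport G) :
    ∫ p : ℝ × ℝ, P' p * G p = - ∫ p : ℝ × ℝ, P p * dY G p := by
  obtain ⟨R, hRp, h0⟩ := radius2 hGc
  have hdGcont : Continuous (dY G) := (dY_contDiff hG).continuous
  have hdGs : HasCompactSupport (dY G) := dY_hasCompactSupport hG hGc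
  have hint1 : Integrable (fun p : ℝ × ℝ => P' p * G p) :=
    (hP'.mul hG.continuous).integrable_of_hasCompactSupport hGc.mul_left
  have hint2 : Integrable (fun p : ℝ × ℝ => P p * dY G p) :=
    (hP.mul hdGcont).integrable_of_hasCompactSupport hdGs.mul_left
  rw [integral_prod' _ hint1, integral_prod' _ hint2, ← integral_neg]
  have key : (fun x => ∫ y, P' (x, y) * G (x, y)) =
      fun x => - ∫ y, P (x, y) * dY G (x, y) := by
    funext x
    exact ibp_line (F := fun y => P (x, y)) (G := fun y => G (x, y))
      (fun y => hPd (x, y)) (fun y => hasDerivAt_sliceY hG x y)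
      (hP'.comp (Continuous.prodMk_right x)) (hdGcont.comp (Continuous.prodMk_right x))
      (sliceY_hcs h0 x)
  rw [key]

/-! ### 2D adjointness of `pinvY`, `pinvX` -/

lemma pinvY_adjoint {f w : ℝ × ℝ → ℂ} (hf : Continuous f) (hfc : HasCompactSupport f)
    (hw : Continuous w) (hwc : HasCompactSupport w) :
    ∫ p : ℝ × ℝ, f p * pinvY w p = - ∫ p : ℝ × ℝ, pinvY f p * w p := by
  obtain ⟨Rf, hRf, h0f⟩ := radius2 hfc
  obtain ⟨Rw, hRw, h0w⟩ := radius2 hwc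
  have hpw : Continuous (pinvY w) := pinvY_continuous hw hwc
  have hpf : Continuous (pinvY f) := pinvY_continuous hf hfc
  have hint1 : Integrable (fun p : ℝ × ℝ => f p * pinvY w p) :=
    (hf.mul hpw).integrable_of_hasCompactSupport hfc.mul_right
  have hint2 : Integrable (fun p : ℝ × ℝ => pinvY f p * w p) :=
    (hpf.mul hw).integrable_of_hasCompactSupport hwc.mul_left
  rw [integral_prod' _ hint1, integral_prod' _ hint2, ← integral_neg]
  have key : (fun x => ∫ y, f (x, y) * pinvY w (x, y)) =
      fun x => - ∫ y, pinvY f (x, y) * w (x, y) := by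
    funext x
    exact pinv_adjoint (f := fun t => f (x, t)) (g := fun t => w (x, t))
      (hf.comp (Continuous.prodMk_right x)) (sliceY_hcs h0f x)
      (hw.comp (Continuous.prodMk_right x)) (sliceY_hcs h0w x)
  rw [key]

lemma pinvX_adjoint {f w : ℝ × ℝ → ℂ} (hf : Continuous f) (hfc : HasCompactSupport f)
    (hw : Continuous w) (hwc : HasCompactSupport w) :
    ∫ p : ℝ × ℝ, f p * pinvX w p = - ∫ p : ℝ × ℝ, pinvX f p * w p := by
  obtain ⟨Rf, hRf, h0f⟩ := radius2 hfc
  obtain ⟨Rw, hRw, h0w⟩ := radius2 hwc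
  have hpw : Continuous (pinvX w) := pinvX_continuous hw hwc
  have hpf : Continuous (pinvX f) := pinvX_continuous hf hfc
  have hint1 : Integrable (fun p : ℝ × ℝ => f p * pinvX w p) :=
    (hf.mul hpw).integrable_of_hasCompactSupport hfc.mul_right
  have hint2 : Integrable (fun p : ℝ × ℝ => pinvX f p * w p) :=
    (hpf.mul hw).integrable_of_hasCompactSupport hwc.mul_left
  rw [integral_prod_symm' _ hint1, integral_prod_symm' _ hint2, ← integral_neg]
  have key : (fun y => ∫ x, f (x, y) * pinvX w (x, y)) =
      fun y => - ∫ x, pinvX f (x, y) * w (x, y) := by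
    funext y
    exact pinv_adjoint (f := fun t => f (t, y)) (g := fun t => w (t, y))
      (hf.comp (Continuous.prodMk_left y)) (sliceX_hcs h0f y)
      (hw.comp (Continuous.prodMk_left y)) (sliceX_hcs h0w y)
  rw [key]

/-- Self-adjointness of `T`. -/
lemma T_selfadjoint {f g : ℝ × ℝ → ℂ}
    (hf : ContDiff ℝ (⊤ : ℕ∞) f) (hfc : HasCompactSupport f)
    (hg : ContDiff ℝ (⊤ : ℕ∞) g) (hgc : HasCompactSupport g) :
    ∫ p : ℝ × ℝ, f p * T g p = ∫ p : ℝ × ℝ, T f p * g p := by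
  have hdXg : Continuous (dX g) := (dX_contDiff hg).continuous
  have hdXgc : HasCompactSupport (dX g) := dX_hasCompactSupport hg hgc
  have hdYg : Continuous (dY g) := (dY_contDiff hg).continuous
  have hdYgc : HasCompactSupport (dY g) := dY_hasCompactSupport hg hgc
  have hdXf : Continuous (dX f) := (dX_contDiff hf).continuous
  have hdXfc : HasCompactSupport (dX f) := dX_hasCompactSupport hf hfc
  have hdYf : Continuous (dY f) := (dY_contDiff hf).continuous
  have hdYfc : HasCompactSupport (dY f) := dY_hasCompactSupport hf hfc
  have hpYf : Continuous (pinvY f) := pinvY_continuous hf.continuous hfc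
  have hpXf : Continuous (pinvX f) := pinvX_continuous hf.continuous hfc
  have hpYdXf : Continuous (pinvY (dX f)) := pinvY_continuous hdXf hdXfc
  have hpXdYf : Continuous (pinvX (dY f)) := pinvX_continuous hdYf hdYfc
  -- term 1
  have t1 : ∫ p : ℝ × ℝ, f p * pinvY (dX g) p = ∫ p : ℝ × ℝ, pinvY (dX f) p * g p := by
    rw [pinvY_adjoint hf.continuous hfc hdXg hdXgc]
    have hibp := ibp_x (P := pinvY f) (P' := pinvY (dX f)) hpYf hpYdXf
      (fun p => hasDerivAt_pinvY hf hfc p) hg hgc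
    rw [hibp]
  -- term 2
  have t2 : ∫ p : ℝ × ℝ, f p * pinvX (dY g) p = ∫ p : ℝ × ℝ, pinvX (dY f) p * g p := by
    rw [pinvX_adjoint hf.continuous hfc hdYg hdYgc]
    have hibp := ibp_y (P := pinvX f) (P' := pinvX (dY f)) hpXf hpXdYf
      (fun p => hasDerivAt_pinvX hf hfc p) hg hgc
    rw [hibp]
  have eTg : (fun p : ℝ × ℝ => f p * T g p) =
      fun p => f p * pinvY (dX g) p + f p * pinvX (dY g) p := by
    funext p
    rw [T_eq hg hgc]
    ring
  have eTf : (fun p : ℝ × ℝ => T f p * g p) =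
      fun p => pinvY (dX f) p * g p + pinvX (dY f) p * g p := by
    funext p
    rw [T_eq hf hfc]
    ring
  rw [eTg, eTf,
    integral_add (f := fun p : ℝ × ℝ => f p * pinvY (dX g) p) (g := fun p : ℝ × ℝ => f p * pinvX (dY g) p)
      ((hf.continuous.mul (pinvY_continuous hdXg hdXgc)).integrable_of_hasCompactSupport hfc.mul_right)
      ((hf.continuous.mul (pinvX_continuous hdYg hdYgc)).integrable_of_hasCompactSupport hfc.mul_right),
    integral_add (f := fun p : ℝ × ℝ => pinvY (dX f) p * g p) (g := fun p : ℝ × ℝ => pinvX (dY f) p * g p)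
      ((hpYdXf.mul hg.continuous).integrable_of_hasCompactSupport hgc.mul_left)
      ((hpXdYf.mul hg.continuous).integrable_of_hasCompactSupport hgc.mul_left),
    t1, t2]


/-- Linearity of `T` under `F + c•G`. -/
lemma T_add_mul {F G : ℝ × ℝ → ℂ} (hF : ContDiff ℝ (⊤ : ℕ∞) F) (hFc : HasCompactSupport F)
    (hG : ContDiff ℝ (⊤ : ℕ∞) G) (hGc : HasCompactSupport G) (c : ℂ) (p : ℝ × ℝ) :
    T (fun q => F q + c * G q) p = T F p + c * T G p := by
  obtain ⟨RF, _, h0F⟩ := radius2 hFc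
  obtain ⟨RG, _, h0G⟩ := radius2 hGc
  have hFco := hF.continuous
  have hGco := hG.continuous
  have hX : dX (pinvY fun q => F q + c * G q) p
      = pinvY (dX F) p + c * pinvY (dX G) p := by
    have e1 : (fun x => pinvY (fun q => F q + c * G q) (x, p.2)) =
        fun x => pinvY F (x, p.2) + c * pinvY G (x, p.2) := by
      funext x
      exact pinv_add_mul
        ((hFco.comp (Continuous.prodMk_right x)).integrable_of_hasCompactSupport
          (sliceY_hcs h0F x))
        ((hGco.comp (Continuous.prodMk_right x)).integrable_of_hasCompactSupport
          (sliceY_hcs h0G x)) c p.2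
    have hd := (hasDerivAt_pinvY hF hFc p).add
      ((hasDerivAt_pinvY hG hGc p).const_mul c)
    show deriv (fun x => pinvY (fun q => F q + c * G q) (x, p.2)) p.1 = _
    rw [e1]
    exact hd.deriv
  have hY : dY (pinvX fun q => F q + c * G q) p
      = pinvX (dY F) p + c * pinvX (dY G) p := by
    have e1 : (fun y => pinvX (fun q => F q + c * G q) (p.1, y)) =
        fun y => pinvX F (p.1, y) + c * pinvX G (p.1, y) := by
      funext y
      exact pinv_add_mul
        ((hFco.comp (Continuous.prodMk_left y)).integrable_of_hasCompactSupport
          (sliceX_hcs h0F y))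
        ((hGco.comp (Continuous.prodMk_left y)).integrable_of_hasCompactSupport
          (sliceX_hcs h0G y)) c p.1
    have hd := (hasDerivAt_pinvX hF hFc p).add
      ((hasDerivAt_pinvX hG hGc p).const_mul c)
    show deriv (fun y => pinvX (fun q => F q + c * G q) (p.1, y)) p.2 = _
    rw [e1]
    exact hd.deriv
  show dX (pinvY fun q => F q + c * G q) p + dY (pinvX fun q => F q + c * G q) p = _
  rw [hX, hY, T_eq hF hFc, T_eq hG hGc]
  ring

lemma hasDerivAt_quadratic (c₀ c₁ c₂ : ℂ) :
    HasDerivAt (fun ε : ℝ => c₀ + (ε : ℂ) * c₁ + (ε : ℂ) * (ε : ℂ) * c₂) c₁ 0 := by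
  have h1 : HasDerivAt (fun ε : ℝ => (ε : ℂ)) 1 0 := by
    exact Complex.ofRealCLM.hasDerivAt (x := (0 : ℝ))
  have h2 := ((h1.mul_const c₁).const_add c₀).add ((h1.mul h1).mul_const c₂)
  convert h2 using 1
  case e'_4 => rfl
  case e'_8 => funext ε; simp only [Pi.add_apply, Pi.mul_apply]
  case e'_9 => push_cast; ring

end NLSaux

open NLSaux
/-- Variational derivative of the NLS Hamiltonian with respect to `u₁`:
`δH/δu₁ = −Δu₂ − (r+s)u₂ − 2u₂·T(u₁u₂)`. -/
theorem NLS_variational_derivative_u₁ (u₁ u₂ h : ℝ × ℝ → ℂ)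
    (hu₁ : ContDiff ℝ (⊤ : ℕ∞) u₁) (hu₁c : HasCompactSupport u₁)
    (hu₂ : ContDiff ℝ (⊤ : ℕ∞) u₂) (hu₂c : HasCompactSupport u₂)
    (hh : ContDiff ℝ (⊤ : ℕ∞) h) (hhc : HasCompactSupport h)
    (r s : ℝ → ℝ) (hr : Continuous r) (hs : Continuous s) :
    HasDerivAt (fun ε : ℝ => Ham r s (fun p => u₁ p + (ε : ℂ) * h p) u₂)
      (∫ p : ℝ × ℝ,
        (-(dX (dX u₂) p + dY (dY u₂) p)
          - ((r p.2 : ℂ) + (s p.1 : ℂ)) * u₂ p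
          - 2 * u₂ p * T (fun q => u₁ q * u₂ q) p) * h p) 0 := by
  have hF : ContDiff ℝ (⊤ : ℕ∞) (fun q => u₁ q * u₂ q) := hu₁.mul hu₂
  have hFc : HasCompactSupport (fun q => u₁ q * u₂ q) := hu₁c.mul_right
  have hG : ContDiff ℝ (⊤ : ℕ∞) (fun q => h q * u₂ q) := hh.mul hu₂
  have hGc : HasCompactSupport (fun q => h q * u₂ q) := hhc.mul_right
  have hTFcont : Continuous (T fun q => u₁ q * u₂ q) := T_continuous hF hFc
  have hTGcont : Continuous (T fun q => h q * u₂ q) := T_continuous hG hGc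
  have hrs : Continuous fun p : ℝ × ℝ => ((r p.2 : ℂ) + (s p.1 : ℂ)) :=
    (Complex.continuous_ofReal.comp (hr.comp continuous_snd)).add
      (Complex.continuous_ofReal.comp (hs.comp continuous_fst))
  -- integrability of the atoms
  have hi1 : Integrable (fun p : ℝ × ℝ => dX h p * dX u₂ p) :=
    ((dX_contDiff hh).continuous.mul
      (dX_contDiff hu₂).continuous).integrable_of_hasCompactSupport
      (dX_hasCompactSupport hh hhc).mul_right
  have hi2 : Integrable (fun p : ℝ × ℝ => dY h p * dY u₂ p) :=
    ((dY_contDiff hh).continuous.mul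
      (dY_contDiff hu₂).continuous).integrable_of_hasCompactSupport
      (dY_hasCompactSupport hh hhc).mul_right
  have hi3 : Integrable (fun p : ℝ × ℝ => h p * ((r p.2 : ℂ) + (s p.1 : ℂ)) * u₂ p) :=
    ((hh.continuous.mul hrs).mul hu₂.continuous).integrable_of_hasCompactSupport
      (hhc.mul_right.mul_right)
  have hi4 : Integrable (fun p : ℝ × ℝ => h p * u₂ p * T (fun q => u₁ q * u₂ q) p) :=
    ((hh.continuous.mul hu₂.continuous).mul hTFcont).integrable_of_hasCompactSupport
      hGc.mul_right
  have hi5 : Integrable (fun p : ℝ × ℝ => u₁ p * u₂ p * T (fun q => h q * u₂ q) p) :=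
    ((hu₁.continuous.mul hu₂.continuous).mul hTGcont).integrable_of_hasCompactSupport
      hFc.mul_right
  have hj1 : Integrable (fun p : ℝ × ℝ => dX u₁ p * dX u₂ p) :=
    ((dX_contDiff hu₁).continuous.mul
      (dX_contDiff hu₂).continuous).integrable_of_hasCompactSupport
      (dX_hasCompactSupport hu₁ hu₁c).mul_right
  have hj2 : Integrable (fun p : ℝ × ℝ => dY u₁ p * dY u₂ p) :=
    ((dY_contDiff hu₁).continuous.mul
      (dY_contDiff hu₂).continuous).integrable_of_hasCompactSupport
      (dY_hasCompactSupport hu₁ hu₁c).mul_right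
  have hj3 : Integrable (fun p : ℝ × ℝ => u₁ p * ((r p.2 : ℂ) + (s p.1 : ℂ)) * u₂ p) :=
    ((hu₁.continuous.mul hrs).mul hu₂.continuous).integrable_of_hasCompactSupport
      (hu₁c.mul_right.mul_right)
  have hj4 : Integrable (fun p : ℝ × ℝ => u₁ p * u₂ p * T (fun q => u₁ q * u₂ q) p) :=
    ((hu₁.continuous.mul hu₂.continuous).mul hTFcont).integrable_of_hasCompactSupport
      hFc.mul_right
  have hk : Integrable (fun p : ℝ × ℝ => h p * u₂ p * T (fun q => h q * u₂ q) p) :=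
    ((hh.continuous.mul hu₂.continuous).mul hTGcont).integrable_of_hasCompactSupport
      hGc.mul_right
  -- combined integrabilities
  have hI₀ : Integrable (fun p : ℝ × ℝ => dX u₁ p * dX u₂ p + dY u₁ p * dY u₂ p
      - u₁ p * ((r p.2 : ℂ) + (s p.1 : ℂ)) * u₂ p
      - u₁ p * u₂ p * T (fun q => u₁ q * u₂ q) p) := ((hj1.add hj2).sub hj3).sub hj4
  have hI₁ : Integrable (fun p : ℝ × ℝ => dX h p * dX u₂ p + dY h p * dY u₂ p
      - h p * ((r p.2 : ℂ) + (s p.1 : ℂ)) * u₂ p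
      - h p * u₂ p * T (fun q => u₁ q * u₂ q) p
      - u₁ p * u₂ p * T (fun q => h q * u₂ q) p) :=
    (((hi1.add hi2).sub hi3).sub hi4).sub hi5
  have hI₂ : Integrable (fun p : ℝ × ℝ => -(h p * u₂ p * T (fun q => h q * u₂ q) p)) :=
    hk.neg
  -- the expansion in ε
  have key : ∀ ε : ℝ, Ham r s (fun p => u₁ p + (ε : ℂ) * h p) u₂ =
      (∫ p : ℝ × ℝ, (dX u₁ p * dX u₂ p + dY u₁ p * dY u₂ p
        - u₁ p * ((r p.2 : ℂ) + (s p.1 : ℂ)) * u₂ p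
        - u₁ p * u₂ p * T (fun q => u₁ q * u₂ q) p))
      + (ε : ℂ) * (∫ p : ℝ × ℝ, (dX h p * dX u₂ p + dY h p * dY u₂ p
        - h p * ((r p.2 : ℂ) + (s p.1 : ℂ)) * u₂ p
        - h p * u₂ p * T (fun q => u₁ q * u₂ q) p
        - u₁ p * u₂ p * T (fun q => h q * u₂ q) p))
      + (ε : ℂ) * (ε : ℂ) *
        (∫ p : ℝ × ℝ, -(h p * u₂ p * T (fun q => h q * u₂ q) p)) := by
    intro ε
    have hdXe : ∀ p : ℝ × ℝ, dX (fun q => u₁ q + (ε : ℂ) * h q) p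
        = dX u₁ p + (ε : ℂ) * dX h p := fun p =>
      ((hasDerivAt_sliceX hu₁ p.1 p.2).add
        ((hasDerivAt_sliceX hh p.1 p.2).const_mul ((ε : ℂ)))).deriv
    have hdYe : ∀ p : ℝ × ℝ, dY (fun q => u₁ q + (ε : ℂ) * h q) p
        = dY u₁ p + (ε : ℂ) * dY h p := fun p =>
      ((hasDerivAt_sliceY hu₁ p.1 p.2).add
        ((hasDerivAt_sliceY hh p.1 p.2).const_mul ((ε : ℂ)))).deriv
    have hprod : (fun q => (u₁ q + (ε : ℂ) * h q) * u₂ q)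
        = fun q => (u₁ q * u₂ q) + (ε : ℂ) * (h q * u₂ q) := by
      funext q; ring
    have hTe : ∀ p : ℝ × ℝ, T (fun q => (u₁ q + (ε : ℂ) * h q) * u₂ q) p
        = T (fun q => u₁ q * u₂ q) p + (ε : ℂ) * T (fun q => h q * u₂ q) p := by
      intro p
      rw [hprod]
      exact T_add_mul hF hFc hG hGc ((ε : ℂ)) p
    have hintegrand : (fun p : ℝ × ℝ =>
        dX (fun q => u₁ q + (ε : ℂ) * h q) p * dX u₂ p
        + dY (fun q => u₁ q + (ε : ℂ) * h q) p * dY u₂ p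
        - (u₁ p + (ε : ℂ) * h p) * ((r p.2 : ℂ) + (s p.1 : ℂ)) * u₂ p
        - (u₁ p + (ε : ℂ) * h p) * u₂ p
            * T (fun q => (u₁ q + (ε : ℂ) * h q) * u₂ q) p)
      = fun p : ℝ × ℝ => (dX u₁ p * dX u₂ p + dY u₁ p * dY u₂ p
          - u₁ p * ((r p.2 : ℂ) + (s p.1 : ℂ)) * u₂ p
          - u₁ p * u₂ p * T (fun q => u₁ q * u₂ q) p)
        + ((ε : ℂ) * (dX h p * dX u₂ p + dY h p * dY u₂ p
          - h p * ((r p.2 : ℂ) + (s p.1 : ℂ)) * u₂ p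
          - h p * u₂ p * T (fun q => u₁ q * u₂ q) p
          - u₁ p * u₂ p * T (fun q => h q * u₂ q) p)
        + (ε : ℂ) * (ε : ℂ) * -(h p * u₂ p * T (fun q => h q * u₂ q) p)) := by
      funext p
      rw [hdXe p, hdYe p, hTe p]
      ring
    show (∫ p : ℝ × ℝ, (dX (fun q => u₁ q + (ε : ℂ) * h q) p * dX u₂ p
        + dY (fun q => u₁ q + (ε : ℂ) * h q) p * dY u₂ p
        - (u₁ p + (ε : ℂ) * h p) * ((r p.2 : ℂ) + (s p.1 : ℂ)) * u₂ p
        - (u₁ p + (ε : ℂ) * h p) * u₂ p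
            * T (fun q => (u₁ q + (ε : ℂ) * h q) * u₂ q) p)) = _
    have hIq : Integrable (fun p : ℝ × ℝ =>
        (ε : ℂ) * (dX h p * dX u₂ p + dY h p * dY u₂ p
          - h p * ((r p.2 : ℂ) + (s p.1 : ℂ)) * u₂ p
          - h p * u₂ p * T (fun q => u₁ q * u₂ q) p
          - u₁ p * u₂ p * T (fun q => h q * u₂ q) p)
        + (ε : ℂ) * (ε : ℂ) * -(h p * u₂ p * T (fun q => h q * u₂ q) p)) :=
      (hI₁.const_mul ((ε : ℂ))).add (hI₂.const_mul ((ε : ℂ) * (ε : ℂ)))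
    rw [hintegrand,
      integral_add hI₀ hIq,
      integral_add (hI₁.const_mul ((ε : ℂ))) (hI₂.const_mul ((ε : ℂ) * (ε : ℂ))),
      integral_const_mul, integral_const_mul]
    ring
  -- identification of the linear coefficient with the claimed integral
  have hA : ∫ p : ℝ × ℝ, dX h p * dX u₂ p = - ∫ p : ℝ × ℝ, h p * dX (dX u₂) p :=
    ibp_x hh.continuous (dX_contDiff hh).continuous
      (fun p => hasDerivAt_sliceX hh p.1 p.2) (dX_contDiff hu₂)
      (dX_hasCompactSupport hu₂ hu₂c)
  have hB : ∫ p : ℝ × ℝ, dY h p * dY u₂ p = - ∫ p : ℝ × ℝ, h p * dY (dY u₂) p :=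
    ibp_y hh.continuous (dY_contDiff hh).continuous
      (fun p => hasDerivAt_sliceY hh p.1 p.2) (dY_contDiff hu₂)
      (dY_hasCompactSupport hu₂ hu₂c)
  have hCsa : ∫ p : ℝ × ℝ, u₁ p * u₂ p * T (fun q => h q * u₂ q) p
      = ∫ p : ℝ × ℝ, h p * u₂ p * T (fun q => u₁ q * u₂ q) p := by
    have e1 : (fun p : ℝ × ℝ => u₁ p * u₂ p * T (fun q => h q * u₂ q) p)
        = fun p : ℝ × ℝ => (fun q => u₁ q * u₂ q) p * T (fun q => h q * u₂ q) p := rfl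
    have e2 : (fun p : ℝ × ℝ => T (fun q => u₁ q * u₂ q) p * (fun q => h q * u₂ q) p)
        = fun p : ℝ × ℝ => h p * u₂ p * T (fun q => u₁ q * u₂ q) p := by
      funext p; ring
    rw [e1, T_selfadjoint hF hFc hG hGc, e2]
  -- integrability of the target atoms
  have ht1 : Integrable (fun p : ℝ × ℝ => h p * dX (dX u₂) p) :=
    (hh.continuous.mul
      (dX_contDiff (dX_contDiff hu₂)).continuous).integrable_of_hasCompactSupport
      hhc.mul_right
  have ht2 : Integrable (fun p : ℝ × ℝ => h p * dY (dY u₂) p) :=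
    (hh.continuous.mul
      (dY_contDiff (dY_contDiff hu₂)).continuous).integrable_of_hasCompactSupport
      hhc.mul_right
  have ht1n : Integrable (fun p : ℝ × ℝ => -(h p * dX (dX u₂) p)) := ht1.neg
  have ht2n : Integrable (fun p : ℝ × ℝ => -(h p * dY (dY u₂) p)) := ht2.neg
  have ht12 : Integrable (fun p : ℝ × ℝ =>
      -(h p * dX (dX u₂) p) + -(h p * dY (dY u₂) p)) := ht1n.add ht2n
  have ht123 : Integrable (fun p : ℝ × ℝ =>
      -(h p * dX (dX u₂) p) + -(h p * dY (dY u₂) p)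
      - h p * ((r p.2 : ℂ) + (s p.1 : ℂ)) * u₂ p) := ht12.sub hi3
  have ht4 : Integrable (fun p : ℝ × ℝ =>
      (2 : ℂ) * (h p * u₂ p * T (fun q => u₁ q * u₂ q) p)) := hi4.const_mul 2
  -- split c₁'s integral
  have hsplit : (∫ p : ℝ × ℝ, (dX h p * dX u₂ p + dY h p * dY u₂ p
      - h p * ((r p.2 : ℂ) + (s p.1 : ℂ)) * u₂ p
      - h p * u₂ p * T (fun q => u₁ q * u₂ q) p
      - u₁ p * u₂ p * T (fun q => h q * u₂ q) p))
      = (∫ p : ℝ × ℝ, dX h p * dX u₂ p) + (∫ p : ℝ × ℝ, dY h p * dY u₂ p)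
      - (∫ p : ℝ × ℝ, h p * ((r p.2 : ℂ) + (s p.1 : ℂ)) * u₂ p)
      - (∫ p : ℝ × ℝ, h p * u₂ p * T (fun q => u₁ q * u₂ q) p)
      - (∫ p : ℝ × ℝ, u₁ p * u₂ p * T (fun q => h q * u₂ q) p) := by
    have hs2 : Integrable (fun p : ℝ × ℝ => dX h p * dX u₂ p + dY h p * dY u₂ p) :=
      hi1.add hi2
    have hs3 : Integrable (fun p : ℝ × ℝ => dX h p * dX u₂ p + dY h p * dY u₂ p
        - h p * ((r p.2 : ℂ) + (s p.1 : ℂ)) * u₂ p) := hs2.sub hi3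
    have hs4 : Integrable (fun p : ℝ × ℝ => dX h p * dX u₂ p + dY h p * dY u₂ p
        - h p * ((r p.2 : ℂ) + (s p.1 : ℂ)) * u₂ p
        - h p * u₂ p * T (fun q => u₁ q * u₂ q) p) := hs3.sub hi4
    rw [integral_sub hs4 hi5, integral_sub hs3 hi4, integral_sub hs2 hi3,
      integral_add hi1 hi2]
  have htgt_eq : (fun p : ℝ × ℝ =>
      (-(dX (dX u₂) p + dY (dY u₂) p)
        - ((r p.2 : ℂ) + (s p.1 : ℂ)) * u₂ p
        - 2 * u₂ p * T (fun q => u₁ q * u₂ q) p) * h p)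
      = fun p : ℝ × ℝ =>
        (-(h p * dX (dX u₂) p) + -(h p * dY (dY u₂) p)
          - h p * ((r p.2 : ℂ) + (s p.1 : ℂ)) * u₂ p)
        - (2 : ℂ) * (h p * u₂ p * T (fun q => u₁ q * u₂ q) p) := by
    funext p; ring
  have hc : (∫ p : ℝ × ℝ,
      (-(dX (dX u₂) p + dY (dY u₂) p)
        - ((r p.2 : ℂ) + (s p.1 : ℂ)) * u₂ p
        - 2 * u₂ p * T (fun q => u₁ q * u₂ q) p) * h p)
      = ∫ p : ℝ × ℝ, (dX h p * dX u₂ p + dY h p * dY u₂ p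
        - h p * ((r p.2 : ℂ) + (s p.1 : ℂ)) * u₂ p
        - h p * u₂ p * T (fun q => u₁ q * u₂ q) p
        - u₁ p * u₂ p * T (fun q => h q * u₂ q) p) := by
    rw [htgt_eq, hsplit, hA, hB, hCsa,
      integral_sub ht123 ht4, integral_sub ht12 hi3, integral_add ht1n ht2n,
      integral_neg, integral_neg, integral_const_mul]
    ring
  have hfun : (fun ε : ℝ => Ham r s (fun p => u₁ p + (ε : ℂ) * h p) u₂)
      = fun ε : ℝ =>
      (∫ p : ℝ × ℝ, (dX u₁ p * dX u₂ p + dY u₁ p * dY u₂ p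
        - u₁ p * ((r p.2 : ℂ) + (s p.1 : ℂ)) * u₂ p
        - u₁ p * u₂ p * T (fun q => u₁ q * u₂ q) p))
      + (ε : ℂ) * (∫ p : ℝ × ℝ, (dX h p * dX u₂ p + dY h p * dY u₂ p
        - h p * ((r p.2 : ℂ) + (s p.1 : ℂ)) * u₂ p
        - h p * u₂ p * T (fun q => u₁ q * u₂ q) p
        - u₁ p * u₂ p * T (fun q => h q * u₂ q) p))
      + (ε : ℂ) * (ε : ℂ) *
        (∫ p : ℝ × ℝ, -(h p * u₂ p * T (fun q => h q * u₂ q) p)) := funext key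
  rw [hc, hfun]
  exact hasDerivAt_quadratic _ _ _
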